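/- Let ℓ > 0, let p ∈ (2,6), and let μ > 0. Then there exists a constant C ≥ 0 such that every continuously differentiable u : [0,ℓ] → ℝ with ∫_0^ℓ u(x)² dx = μ satisfies E_p(u, [0,ℓ]) ≥ −C. (The subcritical constrained NLS energy is bounded from below at every mass; this is the single-edge instance of the bound underlying the existence of ground states on compact graphs in the subcritical regime.) -/

import Mathlib

/-!
Write `A = 2 ∫ |u u'|`. The fundamental theorem of calculus for `u²` gives `u(x)² ≤ u(y)² + A`
for all `x, y`; averaging over `y` yields `‖u‖∞² ≤ μ / ℓ + A`, and Cauchy–Schwarz gives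
`A² ≤ 4 μ ‖u'‖₂²`. Hence `∫ |u|^p ≤ ‖u‖∞^(p-2) μ ≤ μ (μ / ℓ + A)^((p-2)/2)` grows at most like
`‖u'‖₂^((p-2)/2)`, and for `p < 6` this power is below `‖u'‖₂²`, so a Young-type inequality lets
the kinetic term absorb it up to a constant.
-/

open MeasureTheory Set Interval

theorem abs_sub_le_setIntegral_abs_of_hasDerivWithinAt {f f' : ℝ → ℝ} {a b x y : ℝ}
    (hf : ∀ t ∈ Icc a b, HasDerivWithinAt f (f' t) (Icc a b) t)
    (hf' : ContinuousOn f' (Icc a b)) (hx : x ∈ Icc a b) (hy : y ∈ Icc a b) :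
    |f y - f x| ≤ ∫ t in Icc a b, |f' t| := by
  have hsub : uIcc x y ⊆ Icc a b := uIcc_subset_Icc hx hy
  have hftc : ∫ t in x..y, f' t = f y - f x := by
    refine intervalIntegral.integral_eq_sub_of_hasDeriv_right
      (fun t ht => (hf t (hsub ht)).continuousWithinAt.mono hsub) (fun t ht => ?_)
      ((hf'.mono hsub).intervalIntegrable)
    have ht' : t ∈ Ioo a b := ⟨(le_min hx.1 hy.1).trans_lt ht.1, ht.2.trans_le (max_le hx.2 hy.2)⟩
    exact ((hf t (Ioo_subset_Icc_self ht')).hasDerivAt (Icc_mem_nhds ht'.1 ht'.2)).hasDerivWithinAt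
  rw [← hftc]
  calc |∫ t in x..y, f' t| ≤ ∫ t in Ι x y, |f' t| := by
        simpa only [Real.norm_eq_abs] using
          intervalIntegral.norm_integral_le_integral_norm_uIoc (μ := volume) (f := f')
    _ ≤ ∫ t in Icc a b, |f' t| :=
        setIntegral_mono_set hf'.abs.integrableOn_Icc (.of_forall fun _ => abs_nonneg _)
          (.of_forall (uIoc_subset_uIcc.trans hsub))

theorem sq_integral_abs_mul_le {α : Type*} [MeasurableSpace α] {ν : Measure α} {f g : α → ℝ}
    (hf : Integrable (fun x => f x ^ 2) ν) (hg : Integrable (fun x => g x ^ 2) ν)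
    (hfg : Integrable (fun x => f x * g x) ν) :
    (∫ x, |f x * g x| ∂ν) ^ 2 ≤ (∫ x, f x ^ 2 ∂ν) * ∫ x, g x ^ 2 ∂ν := by
  have hquad : ∀ t : ℝ, 0 ≤ (∫ x, f x ^ 2 ∂ν) * (t * t) + (-2 * ∫ x, |f x * g x| ∂ν) * t
      + ∫ x, g x ^ 2 ∂ν := by
    intro t
    have hexpand : ∀ x, (t * |f x| - |g x|) ^ 2
        = t ^ 2 * f x ^ 2 - 2 * t * |f x * g x| + g x ^ 2 := fun x => by
      rw [abs_mul, ← sq_abs (f x), ← sq_abs (g x)]; ring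
    have : 0 ≤ ∫ x, (t * |f x| - |g x|) ^ 2 ∂ν := integral_nonneg fun x => sq_nonneg _
    have hint : Integrable (fun x => t ^ 2 * f x ^ 2 - 2 * t * |f x * g x|) ν :=
      (hf.const_mul _).sub (hfg.abs.const_mul _)
    simp only [hexpand] at this
    rw [integral_add hint hg, integral_sub (hf.const_mul _) (hfg.abs.const_mul _),
      integral_const_mul, integral_const_mul] at this
    linarith
  have := discrim_le_zero hquad
  rw [discrim] at this
  linarith

theorem sq_le_setIntegral_div_add_of_hasDerivWithinAt {u u' : ℝ → ℝ} {a b : ℝ} (hab : a < b)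
    (hu : ∀ t ∈ Icc a b, HasDerivWithinAt u (u' t) (Icc a b) t)
    (hu' : ContinuousOn u' (Icc a b)) {x : ℝ} (hx : x ∈ Icc a b) :
    u x ^ 2 ≤ (∫ t in Icc a b, u t ^ 2) / (b - a) + 2 * ∫ t in Icc a b, |u t * u' t| := by
  have hcont : ContinuousOn u (Icc a b) := fun t ht => (hu t ht).continuousWithinAt
  have hsq : ∀ t ∈ Icc a b, HasDerivWithinAt (fun s => u s ^ 2) (2 * (u t * u' t)) (Icc a b) t :=
    fun t ht => ((hu t ht).fun_pow 2).congr_deriv (by ring)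
  have hvar : ∀ y ∈ Icc a b, u x ^ 2 - 2 * ∫ t in Icc a b, |u t * u' t| ≤ u y ^ 2 := by
    intro y hy
    have := abs_sub_le_setIntegral_abs_of_hasDerivWithinAt hsq
      (continuousOn_const.mul (hcont.mul hu')) hy hx
    simp only [abs_mul (2 : ℝ), abs_two, integral_const_mul] at this
    linarith [le_abs_self (u x ^ 2 - u y ^ 2)]
  have := setIntegral_ge_of_const_le_real (μ := volume) measurableSet_Icc (by simp) hvar
    (hcont.pow 2).integrableOn_Icc
  rw [Real.volume_real_Icc_of_le hab.le] at this
  rw [← sub_le_iff_le_add, le_div_iff₀ (sub_pos.2 hab)]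
  exact this

theorem rpow_le_mul_rpow_add {q r ε s : ℝ} (hq : 0 < q) (hqr : q < r) (hε : 0 < ε)
    (hs : 0 ≤ s) : s ^ q ≤ ε * s ^ r + ε ^ (q / (q - r)) := by
  set R := ε ^ (q - r)⁻¹
  have hR : 0 < R := Real.rpow_pos_of_pos hε _
  have hRq : R ^ q = ε ^ (q / (q - r)) := by rw [← Real.rpow_mul hε.le, inv_mul_eq_div]
  rcases le_total s R with hsR | hRs
  · have : s ^ q ≤ R ^ q := Real.rpow_le_rpow hs hsR hq.le
    have : 0 ≤ ε * s ^ r := by positivity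
    linarith
  · have hRqr : R ^ (q - r) = ε := by
      rw [← Real.rpow_mul hε.le, inv_mul_cancel₀ (sub_ne_zero.2 hqr.ne), Real.rpow_one]
    have hs' : 0 < s := hR.trans_le hRs
    calc s ^ q = s ^ (q - r) * s ^ r := by rw [← Real.rpow_add hs', sub_add_cancel]
      _ ≤ R ^ (q - r) * s ^ r := by
        gcongr ?_ * _
        exact Real.rpow_le_rpow_of_nonpos hR hRs (by linarith)
      _ ≤ ε * s ^ r + ε ^ (q / (q - r)) := by
        rw [hRqr, ← hRq]
        linarith [Real.rpow_nonneg hR.le q]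

theorem abs_rpow_le_rpow_mul_sq {y X p : ℝ} (hp : 2 ≤ p) (hy : y ^ 2 ≤ X) :
    |y| ^ p ≤ X ^ ((p - 2) / 2) * y ^ 2 := by
  have hsplit : |y| ^ p = (y ^ 2) ^ ((p - 2) / 2) * y ^ 2 := by
    rw [← sq_abs, ← Real.rpow_natCast, ← Real.rpow_mul (abs_nonneg y),
      ← Real.rpow_add' (abs_nonneg y) (by push_cast; linarith)]
    congr 1
    push_cast
    ring
  rw [hsplit]
  gcongr

theorem exists_mul_add_rpow_le {κ a c β η : ℝ} (hκ : 0 ≤ κ) (ha : 0 ≤ a) (hc : 0 ≤ c)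
    (hβ : 0 < β) (hβ2 : β < 2) (hη : 0 < η) :
    ∃ C, 0 ≤ C ∧ ∀ T A : ℝ, 0 ≤ T → 0 ≤ A → A ^ 2 ≤ c * T →
      κ * (a + A) ^ β ≤ η * T + C := by
  set ε := η / (2 * κ * c + 1)
  have hε : 0 < ε := by positivity
  have hεη : κ * ε * (2 * c) ≤ η := by
    rw [show κ * ε * (2 * c) = η * (2 * κ * c / (2 * κ * c + 1)) by ring]
    exact mul_le_of_le_one_right hη.le ((div_le_one (by positivity)).2 (by linarith))
  set K := ε ^ (β / (β - 2))
  refine ⟨κ * (ε * (2 * a ^ 2) + K), by positivity, fun T A hT hA hAT => ?_⟩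
  have hyoung := rpow_le_mul_rpow_add hβ hβ2 hε (add_nonneg ha hA)
  rw [Real.rpow_two] at hyoung
  have hsq : (a + A) ^ 2 ≤ 2 * a ^ 2 + 2 * c * T := by nlinarith [sq_nonneg (a - A)]
  have hTη : κ * ε * (2 * c) * T ≤ η * T := mul_le_mul_of_nonneg_right hεη hT
  calc κ * (a + A) ^ β ≤ κ * (ε * (a + A) ^ 2 + K) := mul_le_mul_of_nonneg_left hyoung hκ
    _ ≤ κ * (ε * (2 * a ^ 2 + 2 * c * T) + K) := by gcongr
    _ ≤ η * T + κ * (ε * (2 * a ^ 2) + K) := by linarith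

/-- Subcritical lower bound on an interval: for `ℓ > 0`, `p ∈ (2,6)` and `μ > 0`,
there is a constant `C ≥ 0` such that every `u` continuously differentiable on
`[0,ℓ]` with derivative `u'` and mass `∫_0^ℓ u² = μ` satisfies
`E_p(u,[0,ℓ]) ≥ −C`. -/
theorem subcritical_energy_bounded_below_interval
    (ℓ : ℝ) (hℓ : 0 < ℓ) (p : ℝ) (hp : 2 < p) (hp6 : p < 6) (μ : ℝ) (hμ : 0 < μ) :
    ∃ C : ℝ, 0 ≤ C ∧ ∀ u u' : ℝ → ℝ,
      (∀ x ∈ Set.Icc 0 ℓ, HasDerivWithinAt u (u' x) (Set.Icc 0 ℓ) x) →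
      ContinuousOn u' (Set.Icc 0 ℓ) →
      (∫ x in Set.Icc 0 ℓ, u x ^ 2) = μ →
      (1 / 2) * (∫ x in Set.Icc 0 ℓ, u' x ^ 2) -
        (1 / p) * (∫ x in Set.Icc 0 ℓ, |u x| ^ p) ≥ -C := by
  obtain ⟨C, hC, hbound⟩ := exists_mul_add_rpow_le (κ := μ / p) (a := μ / ℓ) (c := 4 * μ)
    (β := (p - 2) / 2) (η := 1 / 2) (by positivity) (by positivity) (by positivity)
    (by linarith) (by linarith) (by norm_num)
  refine ⟨C, hC, fun u u' hu hu' hmass => ?_⟩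
  have hcont : ContinuousOn u (Icc 0 ℓ) := fun t ht => (hu t ht).continuousWithinAt
  have hu2 : IntegrableOn (fun x => u x ^ 2) (Icc 0 ℓ) := (hcont.pow 2).integrableOn_Icc
  set T := ∫ x in Icc 0 ℓ, u' x ^ 2
  set A := 2 * ∫ x in Icc 0 ℓ, |u x * u' x|
  have hsup : ∀ x ∈ Icc 0 ℓ, u x ^ 2 ≤ μ / ℓ + A := fun x hx => by
    simpa only [hmass, sub_zero] using sq_le_setIntegral_div_add_of_hasDerivWithinAt hℓ hu hu' hx
  have hCS : A ^ 2 ≤ 4 * μ * T := by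
    have := sq_integral_abs_mul_le hu2 (hu'.pow 2).integrableOn_Icc (hcont.mul hu').integrableOn_Icc
    rw [hmass] at this
    linarith
  have hLp : ∫ x in Icc 0 ℓ, |u x| ^ p ≤ (μ / ℓ + A) ^ ((p - 2) / 2) * μ := calc
    _ ≤ ∫ x in Icc 0 ℓ, (μ / ℓ + A) ^ ((p - 2) / 2) * u x ^ 2 :=
      setIntegral_mono_on (hcont.abs.rpow_const fun _ _ => Or.inr (by linarith)).integrableOn_Icc
        (hu2.const_mul _) measurableSet_Icc
        fun x hx => abs_rpow_le_rpow_mul_sq hp.le (hsup x hx)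
    _ = _ := by rw [integral_const_mul, hmass]
  have hpot : 1 / p * ∫ x in Icc 0 ℓ, |u x| ^ p ≤ 1 / 2 * T + C := calc
    _ ≤ 1 / p * ((μ / ℓ + A) ^ ((p - 2) / 2) * μ) := by gcongr
    _ = μ / p * (μ / ℓ + A) ^ ((p - 2) / 2) := by ring
    _ ≤ 1 / 2 * T + C := hbound T A (integral_nonneg fun _ => sq_nonneg _) (by positivity) hCS
  linarith
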